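/- arXiv:1101.5911 — 4 statements merged into one kernel-verified Lean document; each statement's English description precedes it below -/
import Mathlib

section
/- For all w, w' ∈ W and any reduced word w' = s₁s₂⋯s_k (with sᵢ ∈ S), one has (π_{s₁} ∘ π_{s₂} ∘ ⋯ ∘ π_{s_k})(w⁻¹w₀) = w₀ if and only if w ≤ w' in the Bruhat order. -/
/-
Write `x = w⁻¹`. Since `ℓ x + ℓ (x w₀) = ℓ w₀` (the left inversions of `x w₀` are exactly the
reflections that are not left inversions of `x`), `π_s (x w₀) = x' w₀` with `x' = s x` if
`s x < x` and `x' = x` otherwise. So the left-hand side says that stripping the left descents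
`s_k, …, s_1` greedily from `w⁻¹` reaches `1`, and by the exchange property this happens iff `w`
is the product of a reduced subword of `s₁ ⋯ s_k`.

That this subword condition does not depend on the reduced word chosen for `w'` comes from
comparing it with the reflection-chain form of the Bruhat order: the lifting property
`x ≤ y → s x ≤ π_s y` turns reduced subwords into chains, and the strong exchange property turns
chains back into reduced subwords of any word. Strong exchange in turn comes from the
representation of `W` on `W × Bool` in which `s` acts by `(t, ε) ↦ (s t s, ε + [t = s])`: it makes
the parity of the number of occurrences of a reflection in the left inversion sequence of a word
depend only on the product of the word.
-/

/- Context: `(W, S)` is a Coxeter system with `W` finite (encoded by a Coxeter matrix `M` over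
the index type `B`, so that `S = {cs.simple i : i : B}`), `cs.length` is the length function and
`w₀` is the longest element of `W`.  The Bruhat order: `v ≤ w` iff some reduced word for `w`
contains a subword which is a reduced word for `v`.
For `s ∈ S`, `π_s : W → W` is `π_s v = s * v` if `ℓ(s * v) = ℓ(v) + 1` and `π_s v = v`
otherwise. -/

/-- The Bruhat order on `W`. -/
def BruhatLE {B W : Type*} [Group W] {M : CoxeterMatrix B} (cs : CoxeterSystem M W)
    (v w : W) : Prop :=
  ∃ ω : List B, cs.IsReduced ω ∧ cs.wordProd ω = w ∧
    ∃ ω' : List B, ω'.Sublist ω ∧ cs.IsReduced ω' ∧ cs.wordProd ω' = v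

/-- The operator `π_s` for the simple reflection `s = cs.simple i`. -/
noncomputable def piOp {B W : Type*} [Group W] {M : CoxeterMatrix B} (cs : CoxeterSystem M W)
    (i : B) (v : W) : W :=
  if cs.length (cs.simple i * v) = cs.length v + 1 then cs.simple i * v else v

theorem List.even_count_of_getElem_add_eq {α : Type*} [BEq α] (L : List α) (m : ℕ)
    (hL : L.length = 2 * m) (h : ∀ k (hk : k < m), L[k + m]'(by omega) = L[k]'(by omega))
    (a : α) : Even (L.count a) := by
  have hdrop : L.drop m = L.take m :=
    List.ext_getElem (by simp; omega) fun k _ hk => by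
      simpa [add_comm] using h k (by simp at hk; omega)
  have hsplit := congrArg (List.count a) (List.take_append_drop m L)
  rw [List.count_append, hdrop] at hsplit
  exact ⟨_, hsplit.symm⟩

namespace CoxeterSystem

variable {B W : Type*} [Group W] {M : CoxeterMatrix B} (cs : CoxeterSystem M W)

local prefix:100 "σ" => cs.simple
local prefix:100 "π" => cs.wordProd
local prefix:100 "ℓ" => cs.length
local prefix:100 "lis" => cs.leftInvSeq

theorem simple_mul_mul_simple_conj (i : B) (t : W) : σ i * (σ i * t * σ i) * σ i = t := by
  simp [mul_assoc]

theorem simple_mul_mul_simple_eq_simple_iff (i : B) (t : W) :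
    σ i * t * σ i = σ i ↔ t = σ i := by
  constructor
  · intro h
    rw [← cs.simple_mul_mul_simple_conj i t, h]
    simp
  · rintro rfl
    simp

section ReflectionRepresentation

open scoped Classical

noncomputable def reflectionPerm (i : B) : Equiv.Perm (W × Bool) :=
  Function.Involutive.toPerm (fun p => (σ i * p.1 * σ i, p.2 ^^ decide (p.1 = σ i))) <| by
    rintro ⟨t, ε⟩
    simp only [simple_mul_mul_simple_conj, simple_mul_mul_simple_eq_simple_iff, Bool.xor_assoc,
      Bool.xor_self, Bool.xor_false]

theorem reflectionPerm_apply (i : B) (t : W) (ε : Bool) :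
    cs.reflectionPerm i (t, ε) = (σ i * t * σ i, ε ^^ decide (t = σ i)) := rfl

theorem prod_map_reflectionPerm_apply (α : List B) (t : W) (ε : Bool) :
    (α.map cs.reflectionPerm).prod ((π α)⁻¹ * t * π α, ε) =
      (t, ε ^^ decide (Odd ((lis α).count t))) := by
  induction α generalizing t ε with
  | nil => simp [leftInvSeq]
  | cons i α ih =>
    have hconj : (π (i :: α))⁻¹ * t * π (i :: α) = (π α)⁻¹ * (σ i * t * σ i) * π α := by
      simp [wordProd_cons, mul_assoc]
    have hmap := List.count_map_of_injective (lis α) _ (MulAut.conj (σ i)).injective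
      (σ i * t * σ i)
    rw [MulAut.conj_apply, inv_simple, simple_mul_mul_simple_conj] at hmap
    have hcount : (lis (i :: α)).count t =
        (lis α).count (σ i * t * σ i) + if t = σ i then 1 else 0 := by
      simp only [leftInvSeq, List.count_cons, hmap, beq_iff_eq]
      simp only [eq_comm]
    rw [hconj, List.map_cons, List.prod_cons, Equiv.Perm.mul_apply, ih, reflectionPerm_apply,
      hcount, simple_mul_mul_simple_conj, simple_mul_mul_simple_eq_simple_iff]
    by_cases ht : t = σ i
    · simp only [ht, decide_true, if_true, Nat.odd_add_one, decide_not, Bool.xor_true,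
        Bool.xor_not]
    · simp [ht]

theorem even_count_leftInvSeq_alternatingWord (i j : B) (t : W) :
    Even ((lis (alternatingWord i j (2 * M i j))).count t) := by
  refine List.even_count_of_getElem_add_eq _ (M i j) (by simp) (fun k hk => ?_) t
  rw [getElem_leftInvSeq_alternatingWord _ _ _ _ _ (by omega),
    getElem_leftInvSeq_alternatingWord _ _ _ _ _ (by omega),
    prod_alternatingWord_eq_mul_pow, prod_alternatingWord_eq_mul_pow,
    show (2 * (k + M i j) + 1) / 2 = k + M i j by omega, show (2 * k + 1) / 2 = k by omega,
    pow_add, simple_mul_simple_pow', mul_one]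
  simp [parity_simps]

theorem prod_map_reflectionPerm_alternatingWord (i j : B) (m : ℕ) :
    ((alternatingWord i j (2 * m)).map cs.reflectionPerm).prod =
      (cs.reflectionPerm i * cs.reflectionPerm j) ^ m := by
  induction m with
  | zero => simp [alternatingWord]
  | succ m ih =>
    rw [show 2 * (m + 1) = 2 * m + 1 + 1 by ring, alternatingWord_succ, alternatingWord_succ]
    simp [ih, pow_succ]

theorem isLiftable_reflectionPerm : M.IsLiftable cs.reflectionPerm := by
  intro i j
  have hprod : π (alternatingWord i j (2 * M i j)) = 1 := by
    rw [prod_alternatingWord_eq_mul_pow, if_pos (by simp), Nat.mul_div_cancel_left _ two_pos,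
      simple_mul_simple_pow, mul_one]
  rw [← prod_map_reflectionPerm_alternatingWord]
  ext ⟨t, ε⟩ : 1
  simpa [hprod, Nat.not_odd_iff_even.mpr (cs.even_count_leftInvSeq_alternatingWord i j t)]
    using cs.prod_map_reflectionPerm_apply (alternatingWord i j (2 * M i j)) t ε

noncomputable def reflectionRep : W →* Equiv.Perm (W × Bool) :=
  cs.lift ⟨cs.reflectionPerm, cs.isLiftable_reflectionPerm⟩

theorem reflectionRep_wordProd (α : List B) :
    cs.reflectionRep (π α) = (α.map cs.reflectionPerm).prod := by
  induction α with
  | nil => simp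
  | cons i α ih => rw [wordProd_cons, map_mul, ih, reflectionRep, lift_apply_simple]; rfl

/-- The parity of the number of occurrences of `t` in `cs.leftInvSeq ω` for any word `ω` of `w`
(`leftInvParity_wordProd`); defining it through `reflectionRep` makes it independent of `ω`. -/
noncomputable def leftInvParity (w t : W) : Bool := (cs.reflectionRep w (w⁻¹ * t * w, false)).2

theorem leftInvParity_wordProd (α : List B) (t : W) :
    cs.leftInvParity (π α) t = decide (Odd ((lis α).count t)) := by
  simp [leftInvParity, reflectionRep_wordProd, prod_map_reflectionPerm_apply]

theorem reflectionRep_apply (w t : W) (ε : Bool) :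
    cs.reflectionRep w (w⁻¹ * t * w, ε) = (t, ε ^^ cs.leftInvParity w t) := by
  obtain ⟨α, rfl⟩ := cs.wordProd_surjective w
  rw [reflectionRep_wordProd, prod_map_reflectionPerm_apply, leftInvParity_wordProd]

theorem leftInvParity_mul (x y t : W) :
    cs.leftInvParity (x * y) t = (cs.leftInvParity x t ^^ cs.leftInvParity y (x⁻¹ * t * x)) := by
  have hconj : (x * y)⁻¹ * t * (x * y) = y⁻¹ * (x⁻¹ * t * x) * y := by group
  rw [leftInvParity, hconj, map_mul, Equiv.Perm.mul_apply, reflectionRep_apply,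
    reflectionRep_apply, Bool.false_xor, Bool.xor_comm]

theorem leftInvParity_one (t : W) : cs.leftInvParity 1 t = false := by
  simpa using cs.leftInvParity_wordProd [] t

theorem leftInvParity_simple (i : B) (t : W) : cs.leftInvParity (σ i) t = decide (t = σ i) := by
  rw [← wordProd_singleton, leftInvParity_wordProd]
  by_cases ht : σ i = t
  · simp [leftInvSeq, ht]
  · simp [leftInvSeq, ht, Ne.symm ht]

theorem leftInvParity_self {t : W} (ht : cs.IsReflection t) : cs.leftInvParity t t = true := by
  obtain ⟨u, i, rfl⟩ := ht
  have hconj : u⁻¹ * (u * σ i * u⁻¹) * u = σ i := by group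
  have hinv := cs.leftInvParity_mul u u⁻¹ (u * σ i * u⁻¹)
  have hmul := cs.leftInvParity_mul u (σ i * u⁻¹) (u * σ i * u⁻¹)
  rw [mul_inv_cancel, leftInvParity_one, hconj] at hinv
  rw [← mul_assoc, hconj, cs.leftInvParity_mul (σ i) u⁻¹, leftInvParity_simple, inv_simple,
    simple_mul_simple_self, one_mul, decide_eq_true rfl] at hmul
  rw [hmul]
  revert hinv
  cases cs.leftInvParity u (u * σ i * u⁻¹) <;> cases cs.leftInvParity u⁻¹ (σ i) <;> simp

theorem isLeftInversion_of_leftInvParity {w t : W} (h : cs.leftInvParity w t = true) :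
    cs.IsLeftInversion w t := by
  obtain ⟨ω, hω, rfl⟩ := cs.exists_isReduced w
  rw [leftInvParity_wordProd, decide_eq_true_eq] at h
  exact cs.isLeftInversion_of_mem_leftInvSeq hω (List.count_pos_iff.mp h.pos)

theorem leftInvParity_eq_true_iff {w t : W} :
    cs.leftInvParity w t = true ↔ cs.IsLeftInversion w t := by
  refine ⟨cs.isLeftInversion_of_leftInvParity, fun h => ?_⟩
  by_contra hne
  rw [Bool.not_eq_true] at hne
  have ht := h.1
  have hmul := cs.leftInvParity_mul t (t * w) t
  rw [← mul_assoc, ht.mul_self, one_mul, hne, leftInvParity_self cs ht, inv_mul_cancel,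
    one_mul] at hmul
  have hlp : cs.leftInvParity (t * w) t = true := by
    revert hmul; cases cs.leftInvParity (t * w) t <;> simp
  exact ht.isLeftInversion_mul_right_iff.mp (cs.isLeftInversion_of_leftInvParity hlp) h

theorem mem_leftInvSeq_of_isLeftInversion {ω : List B} {t : W}
    (h : cs.IsLeftInversion (π ω) t) : t ∈ lis ω := by
  rw [← leftInvParity_eq_true_iff, leftInvParity_wordProd, decide_eq_true_eq] at h
  exact List.count_pos_iff.mp h.pos

theorem exists_eraseIdx_of_isLeftInversion {ω : List B} {t : W}
    (h : cs.IsLeftInversion (π ω) t) : ∃ k < ω.length, t * π ω = π (ω.eraseIdx k) := by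
  obtain ⟨k, hk, rfl⟩ := List.mem_iff_getElem.mp (cs.mem_leftInvSeq_of_isLeftInversion h)
  exact ⟨k, by simpa using hk, by
    rw [← List.getD_eq_getElem _ 1 hk, getD_leftInvSeq_mul_wordProd]⟩

theorem setOf_isLeftInversion_wordProd {ω : List B} (hω : cs.IsReduced ω) :
    {t | cs.IsLeftInversion (π ω) t} = {t | t ∈ lis ω} :=
  Set.ext fun _ => ⟨cs.mem_leftInvSeq_of_isLeftInversion, cs.isLeftInversion_of_mem_leftInvSeq hω⟩

theorem finite_setOf_isLeftInversion (w : W) : {t | cs.IsLeftInversion w t}.Finite := by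
  obtain ⟨ω, hω, rfl⟩ := cs.exists_isReduced w
  rw [cs.setOf_isLeftInversion_wordProd hω]
  exact List.finite_toSet _

theorem ncard_setOf_isLeftInversion (w : W) : {t | cs.IsLeftInversion w t}.ncard = ℓ w := by
  obtain ⟨ω, hω, rfl⟩ := cs.exists_isReduced w
  rw [cs.setOf_isLeftInversion_wordProd hω, ← List.coe_toFinset, Set.ncard_coe_finset,
    List.toFinset_card_of_nodup hω.nodup_leftInvSeq, length_leftInvSeq, hω.eq]

theorem isLeftInversion_iff_of_forall_length_le {w₀ : W} (hw₀ : ∀ w, ℓ w ≤ ℓ w₀) {t : W} :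
    cs.IsLeftInversion w₀ t ↔ cs.IsReflection t :=
  ⟨And.left, fun ht => ⟨ht, (hw₀ _).lt_of_ne (ht.length_mul_right_ne w₀)⟩⟩

theorem isLeftInversion_mul_iff_of_forall_length_le {w₀ : W} (hw₀ : ∀ w, ℓ w ≤ ℓ w₀)
    {x t : W} : cs.IsLeftInversion (x * w₀) t ↔ cs.IsReflection t ∧ ¬cs.IsLeftInversion x t := by
  have hw₀lp : cs.leftInvParity w₀ (x⁻¹ * t * x) = decide (cs.IsReflection t) := by
    rw [Bool.eq_iff_iff, leftInvParity_eq_true_iff, cs.isLeftInversion_iff_of_forall_length_le hw₀,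
      decide_eq_true_iff]
    simpa using cs.isReflection_conj_iff x⁻¹ t
  rw [← leftInvParity_eq_true_iff, leftInvParity_mul, hw₀lp, ← leftInvParity_eq_true_iff]
  by_cases ht : cs.IsReflection t
  · simp [ht]
  · have hx : cs.leftInvParity x t = false := by
      rw [← Bool.not_eq_true, leftInvParity_eq_true_iff]
      exact fun h => ht h.1
    simp [ht, hx]

theorem length_add_length_mul_of_forall_length_le {w₀ : W} (hw₀ : ∀ w, ℓ w ≤ ℓ w₀) (x : W) :
    ℓ x + ℓ (x * w₀) = ℓ w₀ := by
  have hset : {t | cs.IsLeftInversion (x * w₀) t} =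
      {t | cs.IsLeftInversion w₀ t} \ {t | cs.IsLeftInversion x t} := by
    ext t
    simp only [Set.mem_ofPred_eq, Set.mem_sdiff, cs.isLeftInversion_mul_iff_of_forall_length_le hw₀,
      cs.isLeftInversion_iff_of_forall_length_le hw₀]
  have hsub : {t | cs.IsLeftInversion x t} ⊆ {t | cs.IsLeftInversion w₀ t} :=
    fun _ ht => (cs.isLeftInversion_iff_of_forall_length_le hw₀).mpr ht.1
  have hcard := congrArg Set.ncard hset
  rw [Set.ncard_sdiff hsub (cs.finite_setOf_isLeftInversion x), ncard_setOf_isLeftInversion,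
    ncard_setOf_isLeftInversion, ncard_setOf_isLeftInversion] at hcard
  have := hw₀ x
  omega

end ReflectionRepresentation

theorem isReduced_cons_iff {i : B} {ω : List B} :
    cs.IsReduced (i :: ω) ↔ cs.IsReduced ω ∧ ℓ (σ i * π ω) = ℓ (π ω) + 1 := by
  unfold IsReduced
  rw [wordProd_cons, List.length_cons]
  have := cs.length_wordProd_le ω
  rcases cs.length_simple_mul (π ω) i with h | h <;> omega

def HasReducedSubword (v : W) (ω : List B) : Prop :=
  ∃ τ : List B, τ.Sublist ω ∧ cs.IsReduced τ ∧ π τ = v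

variable {cs} in
theorem HasReducedSubword.mono {v : W} {ω ω' : List B} (h : cs.HasReducedSubword v ω)
    (hω : ω.Sublist ω') : cs.HasReducedSubword v ω' :=
  let ⟨τ, hτ, hred, hprod⟩ := h
  ⟨τ, hτ.trans hω, hred, hprod⟩

variable {cs} in
theorem HasReducedSubword.reverse {v : W} {ω : List B} (h : cs.HasReducedSubword v ω) :
    cs.HasReducedSubword v⁻¹ ω.reverse :=
  let ⟨τ, hτ, hred, hprod⟩ := h
  ⟨τ.reverse, hτ.reverse, hred.reverse, by rw [wordProd_reverse, hprod]⟩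

theorem hasReducedSubword_inv_reverse_iff {v : W} {ω : List B} :
    cs.HasReducedSubword v⁻¹ ω.reverse ↔ cs.HasReducedSubword v ω :=
  ⟨fun h => by simpa using h.reverse, HasReducedSubword.reverse⟩

theorem hasReducedSubword_nil_iff {v : W} : cs.HasReducedSubword v [] ↔ v = 1 :=
  ⟨fun ⟨τ, hτ, _, hprod⟩ => by rw [← hprod, List.sublist_nil.mp hτ, wordProd_nil],
    fun h => ⟨[], .refl _, by simp [IsReduced], by rw [h, wordProd_nil]⟩⟩

theorem hasReducedSubword_wordProd (ω : List B) : cs.HasReducedSubword (π ω) ω := by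
  induction ω with
  | nil => exact cs.hasReducedSubword_nil_iff.mpr (wordProd_nil cs)
  | cons i ω ih =>
    obtain ⟨τ, hτ, hred, hprod⟩ := ih
    rw [wordProd_cons, ← hprod]
    rcases cs.length_simple_mul (π τ) i with hup | hdown
    · exact ⟨i :: τ, hτ.cons_cons i, cs.isReduced_cons_iff.mpr ⟨hred, hup⟩, wordProd_cons ..⟩
    · obtain ⟨k, hk, heq⟩ :=
        cs.exists_eraseIdx_of_isLeftInversion (ω := τ) ⟨cs.isReflection_simple i, by omega⟩
      refine ⟨τ.eraseIdx k, ((List.eraseIdx_sublist τ k).trans hτ).cons i, ?_, heq.symm⟩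
      unfold IsReduced
      rw [← heq, List.length_eraseIdx_of_lt hk, ← hred.eq]
      omega

theorem hasReducedSubword_of_isLeftInversion {ω : List B} {t : W}
    (h : cs.IsLeftInversion (π ω) t) : cs.HasReducedSubword (t * π ω) ω := by
  obtain ⟨k, -, heq⟩ := cs.exists_eraseIdx_of_isLeftInversion h
  rw [heq]
  exact (cs.hasReducedSubword_wordProd _).mono (List.eraseIdx_sublist ω k)

noncomputable def downOp (i : B) (v : W) : W := if ℓ (σ i * v) < ℓ v then σ i * v else v

theorem hasReducedSubword_cons_iff {i : B} {ω : List B} {v : W} :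
    cs.HasReducedSubword v (i :: ω) ↔ cs.HasReducedSubword (cs.downOp i v) ω := by
  unfold downOp
  split_ifs with hv
  · constructor
    · rintro ⟨τ, hτ, hred, rfl⟩
      rcases List.sublist_cons_iff.mp hτ with hτ | ⟨τ₁, rfl, hτ₁⟩
      · exact (cs.hasReducedSubword_of_isLeftInversion ⟨cs.isReflection_simple i, hv⟩).mono hτ
      · rw [wordProd_cons, simple_mul_simple_cancel_left]
        exact ⟨τ₁, hτ₁, (cs.isReduced_cons_iff.mp hred).1, rfl⟩
    · rintro ⟨τ, hτ, hred, hprod⟩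
      refine ⟨i :: τ, hτ.cons_cons i, cs.isReduced_cons_iff.mpr ⟨hred, ?_⟩, ?_⟩
      · rw [hprod, simple_mul_simple_cancel_left]
        rcases cs.length_simple_mul v i with h | h <;> omega
      · rw [wordProd_cons, hprod, simple_mul_simple_cancel_left]
  · refine ⟨fun ⟨τ, hτ, hred, hprod⟩ => ?_, fun h => h.mono (List.sublist_cons_self i ω)⟩
    rcases List.sublist_cons_iff.mp hτ with hτ | ⟨τ₁, rfl, hτ₁⟩
    · exact ⟨τ, hτ, hred, hprod⟩
    · obtain ⟨-, hup⟩ := cs.isReduced_cons_iff.mp hred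
      rw [← hprod, wordProd_cons, simple_mul_simple_cancel_left] at hv
      omega

def BruhatStep (x y : W) : Prop := ∃ t, cs.IsLeftInversion y t ∧ t * y = x

theorem bruhatStep_simple_mul {i : B} {y : W} (h : ℓ (σ i * y) < ℓ y) :
    cs.BruhatStep (σ i * y) y :=
  ⟨σ i, ⟨cs.isReflection_simple i, h⟩, rfl⟩

theorem le_piOp (i : B) (y : W) : Relation.ReflTransGen cs.BruhatStep y (piOp cs i y) := by
  unfold piOp
  split_ifs with h
  · refine .single ⟨σ i, ⟨cs.isReflection_simple i, ?_⟩, cs.simple_mul_simple_cancel_left i⟩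
    rw [simple_mul_simple_cancel_left, h]
    omega
  · exact .refl

theorem simple_mul_le_piOp (i : B) (y : W) :
    Relation.ReflTransGen cs.BruhatStep (σ i * y) (piOp cs i y) := by
  unfold piOp
  split_ifs with h
  · exact .refl
  · refine .single (cs.bruhatStep_simple_mul ?_)
    rcases cs.length_simple_mul y i with h' | h' <;> omega

variable {cs} in
theorem BruhatStep.simple_mul_eq {i : B} {x y : W} (hxy : cs.BruhatStep x y)
    (hy : ℓ (σ i * y) < ℓ y) (hx : ℓ x < ℓ (σ i * x)) (hlen : ℓ y ≤ ℓ x + 1) : σ i * x = y := by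
  obtain ⟨t, ht, rfl⟩ := hxy
  obtain ⟨ω, hω, hωy⟩ := cs.exists_isReduced (σ i * y)
  have hy' : y = π (i :: ω) := by rw [wordProd_cons, ← hωy, simple_mul_simple_cancel_left]
  have hlen_y : ℓ y = ω.length + 1 := by
    have := hω.eq
    rw [← hωy] at this
    rcases cs.length_simple_mul y i with h | h <;> omega
  rw [hy'] at ht
  obtain ⟨k, hk, heq⟩ := cs.exists_eraseIdx_of_isLeftInversion ht
  rw [← hy'] at heq
  rw [heq] at hx hlen ⊢
  -- Deleting any letter of `i :: ω` but the first keeps `σ i` a left descent of `x`.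
  cases k with
  | zero => rw [List.eraseIdx_cons_zero, ← hωy, simple_mul_simple_cancel_left]
  | succ k =>
    exfalso
    rw [List.eraseIdx_cons_succ, wordProd_cons] at hx hlen
    rw [simple_mul_simple_cancel_left] at hx
    have := cs.length_wordProd_le (ω.eraseIdx k)
    rw [List.length_eraseIdx_of_lt (by simpa using hk)] at this
    omega

variable {cs} in
theorem BruhatStep.simple_mul_le_piOp {x y : W} (h : cs.BruhatStep x y) (i : B) :
    Relation.ReflTransGen cs.BruhatStep (σ i * x) (piOp cs i y) := by
  obtain ⟨t, ⟨ht, hlt⟩, rfl⟩ := h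
  have hconj : σ i * (t * y) = σ i * t * σ i * (σ i * y) := by simp [mul_assoc]
  have hrefl : cs.IsReflection (σ i * t * σ i) := by simpa using ht.conj (σ i)
  unfold piOp
  rcases cs.length_simple_mul y i with hy | hy
  · rw [if_pos hy]
    refine .single ⟨_, ⟨hrefl, ?_⟩, hconj.symm⟩
    rw [← hconj]
    rcases cs.length_simple_mul (t * y) i with h | h <;> omega
  · rw [if_neg (by omega)]
    rcases cs.length_simple_mul (t * y) i with hx | hx
    · have hne : ℓ (σ i * (t * y)) ≠ ℓ (σ i * y) := hconj ▸ hrefl.length_mul_right_ne _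
      rcases hne.lt_or_gt with hlt' | hgt
      · exact .tail (.single ⟨_, ⟨hrefl, by rwa [← hconj]⟩, hconj.symm⟩)
          (cs.bruhatStep_simple_mul (by omega))
      · rw [BruhatStep.simple_mul_eq ⟨t, ⟨ht, hlt⟩, rfl⟩ (by omega) (by omega) (by omega)]
    · exact .head (cs.bruhatStep_simple_mul (by omega)) (.single ⟨t, ⟨ht, hlt⟩, rfl⟩)

theorem simple_mul_le_piOp_of_le {x y : W} (h : Relation.ReflTransGen cs.BruhatStep x y) (i : B) :
    Relation.ReflTransGen cs.BruhatStep (σ i * x) (piOp cs i y) := by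
  induction h using Relation.ReflTransGen.head_induction_on with
  | refl => exact cs.simple_mul_le_piOp i y
  | @head x z hxz hzy ih =>
    have hz : Relation.ReflTransGen cs.BruhatStep (piOp cs i z) (piOp cs i y) := by
      by_cases hz : ℓ (σ i * z) = ℓ z + 1
      · rw [piOp, if_pos hz]
        exact ih
      · rw [piOp, if_neg hz]
        exact hzy.trans (cs.le_piOp i y)
    exact (hxz.simple_mul_le_piOp i).trans hz

theorem le_of_hasReducedSubword {ω : List B} (hω : cs.IsReduced ω) {v : W}
    (h : cs.HasReducedSubword v ω) : Relation.ReflTransGen cs.BruhatStep v (π ω) := by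
  induction ω generalizing v with
  | nil =>
    rw [cs.hasReducedSubword_nil_iff.mp h]
    exact .refl
  | cons i ω ih =>
    obtain ⟨hω₁, hup⟩ := cs.isReduced_cons_iff.mp hω
    obtain ⟨τ, hτ, hred, rfl⟩ := h
    have hpi : piOp cs i (π ω) = π (i :: ω) := by rw [piOp, if_pos hup, wordProd_cons]
    rw [← hpi]
    rcases List.sublist_cons_iff.mp hτ with hτ | ⟨τ₁, rfl, hτ₁⟩
    · exact (ih hω₁ ⟨τ, hτ, hred, rfl⟩).trans (cs.le_piOp i (π ω))
    · rw [wordProd_cons]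
      exact cs.simple_mul_le_piOp_of_le (ih hω₁ ⟨τ₁, hτ₁, (cs.isReduced_cons_iff.mp hred).1, rfl⟩) i

theorem hasReducedSubword_of_le {v w : W} (h : Relation.ReflTransGen cs.BruhatStep v w)
    {ω : List B} (hω : π ω = w) : cs.HasReducedSubword v ω := by
  induction h using Relation.ReflTransGen.head_induction_on with
  | refl => exact hω ▸ cs.hasReducedSubword_wordProd ω
  | head hstep _ ih =>
    obtain ⟨t, ht, rfl⟩ := hstep
    obtain ⟨τ, hτ, -, rfl⟩ := ih
    exact (cs.hasReducedSubword_of_isLeftInversion ht).mono hτ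

theorem bruhatLE_wordProd_iff {ω : List B} (hω : cs.IsReduced ω) {v : W} :
    BruhatLE cs v (π ω) ↔ cs.HasReducedSubword v ω :=
  ⟨fun ⟨_, hω', hprod, h⟩ =>
    cs.hasReducedSubword_of_le (hprod ▸ cs.le_of_hasReducedSubword hω' h) rfl,
    fun h => ⟨ω, hω, rfl, h⟩⟩

theorem piOp_mul_of_forall_length_le {w₀ : W} (hw₀ : ∀ w, ℓ w ≤ ℓ w₀) (i : B) (x : W) :
    piOp cs i (x * w₀) = cs.downOp i x * w₀ := by
  have h₁ := cs.length_add_length_mul_of_forall_length_le hw₀ x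
  have h₂ := cs.length_add_length_mul_of_forall_length_le hw₀ (σ i * x)
  rw [mul_assoc] at h₂
  unfold piOp downOp
  rcases cs.length_simple_mul x i with h | h
  · rw [if_neg (by omega), if_neg (by omega)]
  · rw [if_pos (by omega), if_pos (by omega), mul_assoc]

theorem foldr_piOp_mul_of_forall_length_le {w₀ : W} (hw₀ : ∀ w, ℓ w ≤ ℓ w₀) (ω : List B)
    (x : W) : ω.foldr (piOp cs) (x * w₀) = ω.foldr cs.downOp x * w₀ := by
  induction ω with
  | nil => rfl
  | cons i ω ih => rw [List.foldr_cons, List.foldr_cons, ih, cs.piOp_mul_of_forall_length_le hw₀]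

theorem foldr_downOp_eq_one_iff (ω : List B) (x : W) :
    ω.foldr cs.downOp x = 1 ↔ cs.HasReducedSubword x ω.reverse := by
  rw [← List.foldl_reverse]
  induction ω.reverse generalizing x with
  | nil => exact cs.hasReducedSubword_nil_iff.symm
  | cons i ρ ih => rw [List.foldl_cons, ih, hasReducedSubword_cons_iff]

end CoxeterSystem

open Classical in
theorem stmt3_general {B W : Type*} [Group W] {M : CoxeterMatrix B}
    (cs : CoxeterSystem M W)
    (w₀ : W) (hw₀ : ∀ w : W, cs.length w ≤ cs.length w₀) :
    ∀ w w' : W, ∀ ω : List B, cs.IsReduced ω → cs.wordProd ω = w' →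
      (ω.foldr (piOp cs) (w⁻¹ * w₀) = w₀ ↔ BruhatLE cs w w') := by
  rintro w _ ω hω rfl
  rw [cs.foldr_piOp_mul_of_forall_length_le hw₀, mul_eq_right, cs.foldr_downOp_eq_one_iff,
    cs.hasReducedSubword_inv_reverse_iff, cs.bruhatLE_wordProd_iff hω]

open Classical in
theorem stmt3 {B W : Type*} [Group W] [Finite W] {M : CoxeterMatrix B}
    (cs : CoxeterSystem M W)
    (w₀ : W) (hw₀ : ∀ w : W, cs.length w ≤ cs.length w₀) :
    ∀ w w' : W, ∀ ω : List B, cs.IsReduced ω → cs.wordProd ω = w' →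
      (ω.foldr (piOp cs) (w⁻¹ * w₀) = w₀ ↔ BruhatLE cs w w') :=
  stmt3_general cs w₀ hw₀
end

section
/- Let M be a monoid and φ : W → M a map such that φ(u·v) = φ(u)·φ(v) whenever ℓ(u·v) = ℓ(u) + ℓ(v), and φ(s)·φ(s) = φ(s) for every s ∈ S. If w, w' ∈ W satisfy w ≤ w' in the Bruhat order, then φ(w')·φ(w⁻¹w₀) = φ(w₀). -/
theorem List.even_count_of_getElem_add_eq_s4 {α : Type*} [BEq α] (l : List α) (m : ℕ)
    (hl : l.length = 2 * m) (hper : ∀ k (hk : k < m), l[k + m] = l[k]) (a : α) :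
    Even (l.count a) := by
  have : l.drop m = l.take m := by
    refine List.ext_getElem (by simp; omega) fun k h₁ h₂ ↦ ?_
    simpa [add_comm] using hper k (by simp at h₂; omega)
  rw [← List.take_append_drop m l, List.count_append, this]
  exact ⟨_, rfl⟩

namespace CoxeterSystem

open List

variable {B W : Type*} [Group W] {M : CoxeterMatrix B} (cs : CoxeterSystem M W)

local prefix:100 "s " => cs.simple
local prefix:100 "π " => cs.wordProd
local prefix:100 "ℓ " => cs.length
local prefix:100 "ris " => cs.rightInvSeq

theorem prod_map_alternatingWord_two_mul {G : Type*} [Monoid G] (f : B → G) (i j : B) (m : ℕ) :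
    ((alternatingWord i j (2 * m)).map f).prod = (f i * f j) ^ m := by
  induction m with
  | zero => simp [alternatingWord]
  | succ m ih =>
    rw [show 2 * (m + 1) = 2 * m + 1 + 1 by ring, alternatingWord_succ', alternatingWord_succ']
    simp [ih, pow_succ', mul_assoc]

theorem reverse_alternatingWord_two_mul (i j : B) (m : ℕ) :
    (alternatingWord i j (2 * m)).reverse = alternatingWord j i (2 * m) := by
  induction m with
  | zero => rfl
  | succ m ih =>
    rw [show 2 * (m + 1) = 2 * m + 1 + 1 by ring, alternatingWord_succ', alternatingWord_succ',
      alternatingWord_succ, alternatingWord_succ]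
    simp [ih]

section SignRepresentation

variable [DecidableEq W]

-- Lifted to `W`, these make the parity of the number of occurrences of `t` in `ris ω` depend only
-- on `π ω`; this is the source of the strong exchange condition.
def signPerm (i : B) : Equiv.Perm (W × ℤˣ) :=
  Function.Involutive.toPerm (fun p ↦ (s i * p.1 * s i, if p.1 = s i then -p.2 else p.2)) <| by
    rintro ⟨t, e⟩
    by_cases ht : t = s i <;> simp [ht, mul_assoc, mul_eq_one_iff_eq_inv]

theorem signPerm_apply (i : B) (t : W) (e : ℤˣ) :
    cs.signPerm i (t, e) = (s i * t * s i, if t = s i then -e else e) :=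
  rfl

theorem prod_map_signPerm_apply (ω : List B) (t : W) (e : ℤˣ) :
    (ω.map cs.signPerm).prod (t, e) = (π ω * t * (π ω)⁻¹, (-1) ^ (ris ω).count t * e) := by
  induction ω with
  | nil => simp
  | cons i ω ih =>
    have hiff : π ω * t * (π ω)⁻¹ = s i ↔ (π ω)⁻¹ * s i * π ω = t := by
      constructor
      · intro h; rw [← h]; group
      · rintro rfl; group
    rw [map_cons, prod_cons, Equiv.Perm.mul_apply, ih, signPerm_apply, rightInvSeq, count_cons]
    simp only [beq_iff_eq, hiff]
    split_ifs <;> simp [pow_succ, mul_assoc, wordProd_cons]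

theorem even_count_rightInvSeq_alternatingWord_two_mul (i j : B) (t : W) :
    Even ((ris (alternatingWord i j (2 * M i j))).count t) := by
  rw [← reverse_alternatingWord_two_mul, rightInvSeq_reverse, count_reverse]
  refine List.even_count_of_getElem_add_eq_s4 _ (M i j) (by simp) (fun k hk ↦ ?_) t
  rw [getElem_leftInvSeq_alternatingWord _ _ _ _ _ (by omega),
    getElem_leftInvSeq_alternatingWord _ _ _ _ _ (by omega)]
  simp [prod_alternatingWord_eq_mul_pow, Nat.mul_add_div, pow_add]

theorem isLiftable_signPerm : M.IsLiftable cs.signPerm := by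
  intro i j
  rw [← prod_map_alternatingWord_two_mul]
  ext ⟨t, e⟩ : 1
  rw [prod_map_signPerm_apply,
    (even_count_rightInvSeq_alternatingWord_two_mul cs i j t).neg_one_pow,
    prod_alternatingWord_eq_mul_pow]
  simp

noncomputable def signRep : W →* Equiv.Perm (W × ℤˣ) :=
  cs.lift ⟨cs.signPerm, cs.isLiftable_signPerm⟩

theorem signRep_wordProd (ω : List B) : cs.signRep (π ω) = (ω.map cs.signPerm).prod := by
  simp [signRep, wordProd, map_list_prod, Function.comp_def]

noncomputable def inversionSign (w t : W) : ℤˣ := (cs.signRep w (t, 1)).2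

theorem inversionSign_wordProd (ω : List B) (t : W) :
    cs.inversionSign (π ω) t = (-1) ^ (ris ω).count t := by
  simp [inversionSign, signRep_wordProd, prod_map_signPerm_apply]

theorem signRep_apply (w t : W) (e : ℤˣ) :
    cs.signRep w (t, e) = (w * t * w⁻¹, cs.inversionSign w t * e) := by
  obtain ⟨ω, -, rfl⟩ := cs.exists_isReduced w
  rw [signRep_wordProd, prod_map_signPerm_apply, inversionSign_wordProd]

theorem inversionSign_mul (u v t : W) :
    cs.inversionSign (u * v) t = cs.inversionSign v t * cs.inversionSign u (v * t * v⁻¹) := by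
  have := congrArg Prod.snd (signRep_apply cs (u * v) t 1)
  rw [map_mul, Equiv.Perm.mul_apply, signRep_apply, signRep_apply] at this
  simpa [mul_comm] using this.symm

theorem inversionSign_one (t : W) : cs.inversionSign 1 t = 1 := by
  simpa using cs.inversionSign_wordProd [] t

theorem inversionSign_simple_self (i : B) : cs.inversionSign (s i) (s i) = -1 := by
  simpa using cs.inversionSign_wordProd [i] (s i)

theorem inversionSign_self {t : W} (ht : cs.IsReflection t) : cs.inversionSign t t = -1 := by
  obtain ⟨w, i, rfl⟩ := ht
  have hcancel : cs.inversionSign w⁻¹ (w * s i * w⁻¹) * cs.inversionSign w (s i) = 1 := by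
    simpa [inversionSign_one, mul_assoc] using (cs.inversionSign_mul w w⁻¹ (w * s i * w⁻¹)).symm
  calc cs.inversionSign (w * s i * w⁻¹) (w * s i * w⁻¹)
      = cs.inversionSign w⁻¹ (w * s i * w⁻¹) * cs.inversionSign (w * s i) (s i) := by
        rw [inversionSign_mul, show w⁻¹ * (w * s i * w⁻¹) * w⁻¹⁻¹ = s i by group]
    _ = cs.inversionSign w⁻¹ (w * s i * w⁻¹) * (-1 * cs.inversionSign w (s i)) := by
        rw [inversionSign_mul, inversionSign_simple_self, show s i * s i * (s i)⁻¹ = s i by group]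
    _ = -1 := by rw [neg_one_mul, mul_neg, hcancel]

theorem mem_rightInvSeq_of_inversionSign_eq_neg_one {ω : List B} {t : W}
    (h : cs.inversionSign (π ω) t = -1) : t ∈ ris ω := by
  rw [← count_pos_iff, Nat.pos_iff_ne_zero]
  rintro h0
  rw [inversionSign_wordProd, h0, pow_zero] at h
  exact absurd h (by decide)

theorem inversionSign_eq_neg_one_of_isRightInversion {w t : W} (h : cs.IsRightInversion w t) :
    cs.inversionSign w t = -1 := by
  refine (Int.units_eq_one_or _).resolve_left fun h1 ↦ ?_
  have hwt : cs.inversionSign (w * t) t = -1 := by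
    have := cs.inversionSign_mul (w * t) t t
    rwa [mul_assoc, h.1.mul_self, mul_one, one_mul, h.1.inv, h1, inversionSign_self cs h.1,
      eq_comm, neg_one_mul, neg_eq_iff_eq_neg] at this
  obtain ⟨ω, hω, hωwt⟩ := cs.exists_isReduced (w * t)
  rw [hωwt] at hwt
  have := (cs.isRightInversion_of_mem_rightInvSeq hω
    (cs.mem_rightInvSeq_of_inversionSign_eq_neg_one hwt)).2
  rw [← hωwt, mul_assoc, h.1.mul_self, mul_one] at this
  exact lt_asymm h.2 this

end SignRepresentation

theorem mem_rightInvSeq_of_isRightInversion {ω : List B} {t : W}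
    (h : cs.IsRightInversion (π ω) t) : t ∈ ris ω := by
  classical
  exact cs.mem_rightInvSeq_of_inversionSign_eq_neg_one
    (cs.inversionSign_eq_neg_one_of_isRightInversion h)

def BruhatEdge (u w : W) : Prop :=
  ∃ t, cs.IsReflection t ∧ w = u * t ∧ ℓ u < ℓ w

-- The Bruhat order, as chains in the Bruhat graph: transitivity comes for free.
local infix:50 " ≤ᵇ " => Relation.ReflTransGen cs.BruhatEdge

theorem bruhatEdge_simple_mul {w : W} {i : B} (h : ℓ w < ℓ (s i * w)) :
    cs.BruhatEdge w (s i * w) :=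
  ⟨w⁻¹ * s i * w, by simpa using (cs.isReflection_simple i).conj w⁻¹, by group, h⟩

theorem bruhatEdge_of_length_simple_mul_lt {w : W} {i : B} (h : ℓ (s i * w) < ℓ w) :
    cs.BruhatEdge (s i * w) w := by
  simpa using cs.bruhatEdge_simple_mul (w := s i * w) (i := i) (by simpa using h)

theorem length_lt_of_bruhatEdge {u w : W} (h : cs.BruhatEdge u w) : ℓ u < ℓ w := by
  obtain ⟨-, -, -, h⟩ := h
  exact h

theorem length_le_of_bruhat {u w : W} (h : u ≤ᵇ w) : ℓ u ≤ ℓ w := by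
  induction h with
  | refl => rfl
  | tail _ hedge ih => exact ih.trans (cs.length_lt_of_bruhatEdge hedge).le

theorem eq_of_bruhat_of_length_le {u w : W} (h : u ≤ᵇ w) (hlen : ℓ w ≤ ℓ u) : u = w := by
  rcases h.cases_tail with rfl | ⟨v, huv, hvw⟩
  · rfl
  · exact absurd ((cs.length_le_of_bruhat huv).trans_lt (cs.length_lt_of_bruhatEdge hvw)) (by omega)

noncomputable def demazureMul (i : B) (w : W) : W :=
  if ℓ w < ℓ (s i * w) then s i * w else w

noncomputable def listDemazureMul (ω : List B) (w : W) : W :=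
  ω.foldr cs.demazureMul w

theorem bruhat_demazureMul (i : B) (w : W) : w ≤ᵇ cs.demazureMul i w := by
  unfold demazureMul
  split_ifs with h
  · exact .single (cs.bruhatEdge_simple_mul h)
  · exact .refl

theorem simple_mul_bruhat_demazureMul (i : B) (w : W) : s i * w ≤ᵇ cs.demazureMul i w := by
  unfold demazureMul
  split_ifs with h
  · exact .refl
  · refine .single (cs.bruhatEdge_of_length_simple_mul_lt ?_)
    rcases cs.length_simple_mul w i with h' | h' <;> omega

theorem simple_mul_bruhat_of_bruhatEdge {x y : W} {i : B}
    (hsub : ∀ ζ : List B, cs.IsReduced ζ → ζ.length < ℓ y → ∀ α, α <+ ζ → π α ≤ᵇ π ζ)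
    (hxy : cs.BruhatEdge x y) (hy : ℓ (s i * y) < ℓ y) : s i * x ≤ᵇ y := by
  obtain ⟨t, ht, hyx, hlt⟩ := hxy
  have hyt : y * t = x := by rw [hyx, mul_assoc, ht.mul_self, mul_one]
  obtain ⟨ζ, hζ, hζy⟩ := cs.exists_isReduced (s i * y)
  have hword : y = π (i :: ζ) := by rw [wordProd_cons, ← hζy, simple_mul_simple_cancel_left]
  obtain ⟨j, hj, hjt⟩ := getElem_of_mem <| cs.mem_rightInvSeq_of_isRightInversion (ω := i :: ζ)
    ⟨ht, by rwa [← hword, hyt]⟩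
  -- by strong exchange, `x` is `π (i :: ζ)` with one letter deleted
  have herase := cs.wordProd_mul_getD_rightInvSeq (i :: ζ) j
  rw [getD_eq_getElem _ _ hj, hjt, ← hword, hyt] at herase
  cases j with
  | zero =>
    rw [herase, eraseIdx_cons_zero, ← hζy, simple_mul_simple_cancel_left]
  | succ j =>
    rw [herase, eraseIdx_cons_succ, wordProd_cons, simple_mul_simple_cancel_left]
    have hζlen : ζ.length < ℓ y := by rw [← hζ.eq, ← hζy]; exact hy
    refine (hsub ζ hζ hζlen _ (eraseIdx_sublist ζ j)).tail ?_
    exact hζy ▸ cs.bruhatEdge_of_length_simple_mul_lt hy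

theorem demazureMul_bruhat_demazureMul_of_bruhatEdge {x y : W} (i : B)
    (hsub : ∀ ζ : List B, cs.IsReduced ζ → ζ.length < ℓ y → ∀ α, α <+ ζ → π α ≤ᵇ π ζ)
    (hxy : cs.BruhatEdge x y) : cs.demazureMul i x ≤ᵇ cs.demazureMul i y := by
  by_cases hy : ℓ y < ℓ (s i * y)
  · rw [demazureMul, demazureMul, if_pos hy]
    split_ifs with hx
    · obtain ⟨t, ht, rfl, hlt⟩ := hxy
      refine .single ⟨t, ht, (mul_assoc ..).symm, ?_⟩
      rcases cs.length_simple_mul x i with h' | h' <;> omega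
    · exact .tail (.single hxy) (cs.bruhatEdge_simple_mul hy)
  · rw [demazureMul, demazureMul, if_neg hy]
    split_ifs with hx
    · exact cs.simple_mul_bruhat_of_bruhatEdge hsub hxy (by
        rcases cs.length_simple_mul y i with h' | h' <;> omega)
    · exact .single hxy

theorem simple_mul_bruhat_demazureMul_of_bruhat_of_length_le {v y : W} {n : ℕ} (i : B)
    (hsub : ∀ ζ : List B, cs.IsReduced ζ → ζ.length < n → ∀ α, α <+ ζ → π α ≤ᵇ π ζ)
    (hvy : v ≤ᵇ y) (hy : ℓ y ≤ n) : s i * v ≤ᵇ cs.demazureMul i y := by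
  induction hvy with
  | refl => exact cs.simple_mul_bruhat_demazureMul i v
  | tail _ hedge ih =>
    have hlt := cs.length_lt_of_bruhatEdge hedge
    exact (ih (by omega)).trans <| cs.demazureMul_bruhat_demazureMul_of_bruhatEdge i
      (fun ζ hζ hlen ↦ hsub ζ hζ (by omega)) hedge

theorem wordProd_bruhat_of_sublist {ω α : List B} (hω : cs.IsReduced ω) (h : α <+ ω) :
    π α ≤ᵇ π ω := by
  -- induction on length: the lifting property at `π ζ` needs the claim for all shorter words
  suffices ∀ n, ∀ ζ : List B, cs.IsReduced ζ → ζ.length < n → ∀ α, α <+ ζ → π α ≤ᵇ π ζ from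
    this _ ω hω (Nat.lt_succ_self _) α h
  intro n
  induction n with
  | zero => intro ζ _ hlen; omega
  | succ n ih =>
    rintro (_ | ⟨i, ζ⟩) hζ hlen α hα
    · rw [sublist_nil.mp hα]
    have hζ' : cs.IsReduced ζ := by simpa using hζ.drop 1
    have hup : ℓ (π ζ) < ℓ (s i * π ζ) := by
      rw [← wordProd_cons, hζ.eq, hζ'.eq, length_cons]; omega
    rw [length_cons] at hlen
    rw [wordProd_cons]
    cases hα with
    | cons _ hα => exact (ih ζ hζ' (by omega) α hα).tail (cs.bruhatEdge_simple_mul hup)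
    | cons_cons _ hα =>
      have := cs.simple_mul_bruhat_demazureMul_of_bruhat_of_length_le i ih
        (ih ζ hζ' (by omega) _ hα) (by rw [hζ'.eq]; omega)
      rw [wordProd_cons]
      rwa [demazureMul, if_pos hup] at this

theorem simple_mul_bruhat_demazureMul_of_bruhat {v y : W} (i : B) (h : v ≤ᵇ y) :
    s i * v ≤ᵇ cs.demazureMul i y :=
  cs.simple_mul_bruhat_demazureMul_of_bruhat_of_length_le i
    (fun _ hζ _ _ hα ↦ cs.wordProd_bruhat_of_sublist hζ hα) h le_rfl

theorem wordProd_mul_bruhat_listDemazureMul {α ω : List B} (h : α <+ ω) (x : W) :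
    π α * x ≤ᵇ cs.listDemazureMul ω x := by
  induction h with
  | slnil => simpa using .refl
  | cons i _ ih => exact ih.trans (cs.bruhat_demazureMul i _)
  | cons_cons i _ ih =>
    rw [wordProd_cons, mul_assoc]
    exact cs.simple_mul_bruhat_demazureMul_of_bruhat i ih

section Morphism

variable {Mon : Type*} [Monoid Mon] {φ : W → Mon}

theorem apply_demazureMul
    (hmul : ∀ u v : W, ℓ (u * v) = ℓ u + ℓ v → φ (u * v) = φ u * φ v)
    (hidem : ∀ i : B, φ (s i) * φ (s i) = φ (s i)) (i : B) (w : W) :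
    φ (cs.demazureMul i w) = φ (s i) * φ w := by
  rw [demazureMul]
  split_ifs with h
  · exact hmul _ _ (by rw [length_simple]; rcases cs.length_simple_mul w i with h' | h' <;> omega)
  · have hw : φ w = φ (s i) * φ (s i * w) := by
      conv_lhs => rw [← cs.simple_mul_simple_cancel_left (w := w) i]
      refine hmul _ _ ?_
      rw [simple_mul_simple_cancel_left, length_simple]
      rcases cs.length_simple_mul w i with h' | h' <;> omega
    rw [hw, ← mul_assoc, hidem]

theorem apply_listDemazureMul
    (hmul : ∀ u v : W, ℓ (u * v) = ℓ u + ℓ v → φ (u * v) = φ u * φ v)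
    (hidem : ∀ i : B, φ (s i) * φ (s i) = φ (s i)) {ω : List B} (hω : cs.IsReduced ω) (x : W) :
    φ (cs.listDemazureMul ω x) = φ (π ω) * φ x := by
  induction ω with
  | nil => simpa [listDemazureMul] using hmul 1 x (by simp)
  | cons i ω ih =>
    have hω' : cs.IsReduced ω := by simpa using hω.drop 1
    have hlen : ℓ (s i * π ω) = ℓ (s i) + ℓ (π ω) := by
      rw [← wordProd_cons, hω.eq, hω'.eq, length_simple, length_cons, add_comm]
    rw [wordProd_cons, hmul _ _ hlen, mul_assoc, ← ih hω', ← cs.apply_demazureMul hmul hidem]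
    rfl

end Morphism

end CoxeterSystem

theorem stmt4_general {B W : Type*} [Group W] {M : CoxeterMatrix B}
    (cs : CoxeterSystem M W)
    (w₀ : W) (hw₀ : ∀ w : W, cs.length w ≤ cs.length w₀)
    {Mon : Type*} [Monoid Mon] (φ : W → Mon)
    (hmul : ∀ u v : W, cs.length (u * v) = cs.length u + cs.length v →
      φ (u * v) = φ u * φ v)
    (hidem : ∀ i : B, φ (cs.simple i) * φ (cs.simple i) = φ (cs.simple i)) :
    ∀ w w' : W, BruhatLE cs w w' → φ w' * φ (w⁻¹ * w₀) = φ w₀ := by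
  rintro - - ⟨ω, hω, rfl, α, hαω, -, rfl⟩
  have hle := cs.wordProd_mul_bruhat_listDemazureMul hαω ((cs.wordProd α)⁻¹ * w₀)
  rw [mul_inv_cancel_left] at hle
  rw [← cs.apply_listDemazureMul hmul hidem hω, ← cs.eq_of_bruhat_of_length_le hle (hw₀ _)]

theorem stmt4 {B W : Type*} [Group W] [Finite W] {M : CoxeterMatrix B}
    (cs : CoxeterSystem M W)
    (w₀ : W) (hw₀ : ∀ w : W, cs.length w ≤ cs.length w₀)
    {Mon : Type*} [Monoid Mon] (φ : W → Mon)
    (hmul : ∀ u v : W, cs.length (u * v) = cs.length u + cs.length v →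
      φ (u * v) = φ u * φ v)
    (hidem : ∀ i : B, φ (cs.simple i) * φ (cs.simple i) = φ (cs.simple i)) :
    ∀ w w' : W, BruhatLE cs w w' → φ w' * φ (w⁻¹ * w₀) = φ w₀ :=
  stmt4_general cs w₀ hw₀ φ hmul hidem
end

section
/- Let M be a monoid and φ : W → M a map such that φ(u·v) = φ(u)·φ(v) whenever ℓ(u·v) = ℓ(u) + ℓ(v), and φ(s)·φ(s) = φ(s) for every s ∈ S. Then for all w', v ∈ W and any reduced word w' = s₁s₂⋯s_k (with sᵢ ∈ S), one has φ(w')·φ(v) = φ((π_{s₁} ∘ π_{s₂} ∘ ⋯ ∘ π_{s_k})(v)). In particular, for each pair (w', v) there exists an element w̄ ∈ W, independent of (M, φ), with φ(w')·φ(v) = φ(w̄). -/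
/- Each `φ(s)` acts on `φ(W)` by `π_s`: if `s v > v` then `φ(s) φ(v) = φ(s v)` by
multiplicativity on length-additive products, and if `s v < v` then `φ(v) = φ(s) φ(s v)`
absorbs a further factor `φ(s)` since `φ(s)` is idempotent. A reduced word splits `φ(w')` into
the product of the `φ(sᵢ)`, which then act one at a time. -/

namespace CoxeterSystem

variable {B W : Type*} [Group W] {M : CoxeterMatrix B}

theorem IsReduced.length_simple_mul_wordProd {cs : CoxeterSystem M W} {i : B} {ω : List B}
    (h : cs.IsReduced (i :: ω)) :
    cs.length (cs.simple i * cs.wordProd ω) =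
      cs.length (cs.simple i) + cs.length (cs.wordProd ω) := by
  have hω : cs.IsReduced ω := by simpa using h.drop 1
  rw [← cs.wordProd_cons, h.eq, hω.eq, cs.length_simple, List.length_cons, add_comm]

variable (cs : CoxeterSystem M W) {Mon : Type*} [Monoid Mon] {φ : W → Mon}

theorem simple_mul_eq_piOp
    (hmul : ∀ u v : W, cs.length (u * v) = cs.length u + cs.length v → φ (u * v) = φ u * φ v)
    (hidem : ∀ i : B, φ (cs.simple i) * φ (cs.simple i) = φ (cs.simple i)) (i : B) (v : W) :
    φ (cs.simple i) * φ v = φ (piOp cs i v) := by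
  unfold piOp
  split_ifs with hup
  · exact (hmul _ _ (by rw [hup, cs.length_simple, add_comm])).symm
  · have hdown : cs.length (cs.simple i * v) + 1 = cs.length v :=
      (cs.length_simple_mul v i).resolve_left hup
    have hsplit : φ v = φ (cs.simple i) * φ (cs.simple i * v) := by
      conv_lhs => rw [← cs.simple_mul_simple_cancel_left (i := i) (w := v)]
      exact hmul _ _ (by rw [cs.simple_mul_simple_cancel_left, cs.length_simple, add_comm, hdown])
    rw [hsplit, ← mul_assoc, hidem]

theorem wordProd_mul_eq_foldr_piOp
    (hmul : ∀ u v : W, cs.length (u * v) = cs.length u + cs.length v → φ (u * v) = φ u * φ v)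
    (hidem : ∀ i : B, φ (cs.simple i) * φ (cs.simple i) = φ (cs.simple i))
    {ω : List B} (hω : cs.IsReduced ω) (v : W) :
    φ (cs.wordProd ω) * φ v = φ (ω.foldr (piOp cs) v) := by
  induction ω with
  | nil =>
    rw [cs.wordProd_nil, List.foldr_nil, ← hmul 1 v (by simp), one_mul]
  | cons i ω ih =>
    have hω' : cs.IsReduced ω := by simpa using hω.drop 1
    rw [cs.wordProd_cons, hmul _ _ hω.length_simple_mul_wordProd, mul_assoc, ih hω',
      List.foldr_cons, simple_mul_eq_piOp cs hmul hidem]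

end CoxeterSystem

theorem stmt6_general {B W : Type*} [Group W] {M : CoxeterMatrix B}
    (cs : CoxeterSystem M W)
    {Mon : Type*} [Monoid Mon] (φ : W → Mon)
    (hmul : ∀ u v : W, cs.length (u * v) = cs.length u + cs.length v →
      φ (u * v) = φ u * φ v)
    (hidem : ∀ i : B, φ (cs.simple i) * φ (cs.simple i) = φ (cs.simple i)) :
    ∀ w' v : W, ∀ ω : List B, cs.IsReduced ω → cs.wordProd ω = w' →
      φ w' * φ v = φ (ω.foldr (piOp cs) v) := by
  rintro w' v ω hω rfl
  exact cs.wordProd_mul_eq_foldr_piOp hmul hidem hω v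

theorem stmt6 {B W : Type*} [Group W] [Finite W] {M : CoxeterMatrix B}
    (cs : CoxeterSystem M W)
    {Mon : Type*} [Monoid Mon] (φ : W → Mon)
    (hmul : ∀ u v : W, cs.length (u * v) = cs.length u + cs.length v →
      φ (u * v) = φ u * φ v)
    (hidem : ∀ i : B, φ (cs.simple i) * φ (cs.simple i) = φ (cs.simple i)) :
    ∀ w' v : W, ∀ ω : List B, cs.IsReduced ω → cs.wordProd ω = w' →
      φ w' * φ v = φ (ω.foldr (piOp cs) v) :=
  stmt6_general cs φ hmul hidem
end

section
/- Let I ⊆ Δ, let r ∈ ℚ[Λ] be invariant under W_I, let v ∈ W and w' ∈ W_I with ℓ(v·w') = ℓ(v) + ℓ(w'). Then for any reduced words for v and for w', one has L_v(L_{w'}(r · e^{−ρ})) = L_v(r · e^{−ρ}). -/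
/- Context: a reduced crystallographic root system `Φ` spanning a finite-dimensional
`ℚ`-vector space `V`, with Weyl group `W` (a Coxeter system whose simple reflections
are indexed by the base `Δ` of simple roots), positive roots `Φ⁺`, weight lattice
`Λ = {λ ∈ V : ⟨λ, α^∨⟩ ∈ ℤ for all α ∈ Φ}`, and `ρ = (1/2)·Σ_{α ∈ Φ⁺} α`.
`ℚ[Λ]` is the group algebra of `Λ` over `ℚ` with basis `e^λ`, on which `W` acts by ring
automorphisms via `w · e^λ = e^{w(λ)}`.  For a simple root `α`, the Demazure operator
`L_{s_α}` is the unique `ℚ`-linear map with `(1 - e^α) · L_{s_α}(f) = f - s_α · f`, and for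
a reduced word `w = s_{α₁} ⋯ s_{α_k}` we set `L_w = L_{s_{α₁}} ∘ ⋯ ∘ L_{s_{α_k}}`. -/

/-- All the data of the context: the root system, the simple/positive roots, `ρ`, the
weight lattice `Λ`, and the Weyl group `W` with its Coxeter structure and its action
on `V` (where the simple reflection indexed by `b : B` acts as the reflection attached to
the simple root `idx b`). -/
structure RootCtx (V : Type) [AddCommGroup V] [Module ℚ V]
    (B : Type) (W : Type) [Group W] (M : CoxeterMatrix B) where
  finV : FiniteDimensional ℚ V
  /-- the finite set of roots -/
  Φ : Finset V
  span_eq_top : Submodule.span ℚ (Φ : Set V) = ⊤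
  /-- `coroot α` is the linear functional `⟨·, α^∨⟩` -/
  coroot : V → V →ₗ[ℚ] ℚ
  coroot_self : ∀ α ∈ Φ, coroot α α = 2
  crystallographic : ∀ α ∈ Φ, ∀ β ∈ Φ, ∃ n : ℤ, (n : ℚ) = coroot α β
  /-- the root system is reduced -/
  reduced : ∀ α ∈ Φ, ∀ c : ℚ, c • α ∈ Φ → c = 1 ∨ c = -1
  reflect_root_mem : ∀ α ∈ Φ, ∀ β ∈ Φ, β - coroot α β • α ∈ Φ
  /-- the base of simple roots -/
  Δ : Finset V
  Δ_sub : Δ ⊆ Φ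
  Δ_indep : LinearIndependent ℚ (fun β : {x // x ∈ Δ} => (β : V))
  /-- the set of positive roots -/
  Φpos : Finset V
  Φpos_sub : Φpos ⊆ Φ
  mem_Φpos : ∀ α ∈ Φ, (α ∈ Φpos ↔
    ∃ c : V → ℚ, (∀ β ∈ Δ, 0 ≤ c β) ∧ α = ∑ β ∈ Δ, c β • β)
  pos_or_neg : ∀ α ∈ Φ, α ∈ Φpos ∨ -α ∈ Φpos
  /-- the half-sum of the positive roots -/
  ρ : V
  ρ_def : (2 : ℚ) • ρ = ∑ α ∈ Φpos, α
  /-- the weight lattice -/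
  Λ : AddSubgroup V
  mem_Λ : ∀ x : V, x ∈ Λ ↔ ∀ α ∈ Φ, ∃ n : ℤ, (n : ℚ) = coroot α x
  ρ_mem : ρ ∈ Λ
  root_mem : ∀ α ∈ Φ, α ∈ Λ
  /-- the Weyl group `W` as a Coxeter system, whose simple reflections are the reflections
  in the simple roots -/
  cs : CoxeterSystem M W
  /-- the indexing of the simple roots by `B` -/
  idx : B ≃ {α // α ∈ Δ}
  /-- the (faithful) action of the Weyl group on `V` -/
  act : W →* (V ≃ₗ[ℚ] V)
  act_faithful : Function.Injective act
  act_simple : ∀ (b : B) (x : V),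
    act (cs.simple b) x = x - coroot (idx b : V) x • (idx b : V)
  act_mem : ∀ (w : W), ∀ x ∈ Λ, act w x ∈ Λ

namespace RootCtx

variable {V B W : Type} [AddCommGroup V] [Module ℚ V] [Group W] {M : CoxeterMatrix B}
variable (ctx : RootCtx V B W M)

/-- The group algebra `ℚ[Λ]`. -/
abbrev QΛ : Type := AddMonoidAlgebra ℚ ↥ctx.Λ

/-- The basis element `e^λ` of `ℚ[Λ]`. -/
noncomputable def e (lam : ↥ctx.Λ) : ctx.QΛ := AddMonoidAlgebra.of' ℚ ↥ctx.Λ lam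

/-- `ρ` as an element of the weight lattice. -/
def ρΛ : ↥ctx.Λ := ⟨ctx.ρ, ctx.ρ_mem⟩

/-- The simple root indexed by `b`, as an element of the weight lattice. -/
def simpleRoot (b : B) : ↥ctx.Λ :=
  ⟨(ctx.idx b : V), ctx.root_mem _ (ctx.Δ_sub (ctx.idx b).2)⟩

/-- The action of `w ∈ W` on the weight lattice `Λ`. -/
noncomputable def actΛ (w : W) : ↥ctx.Λ ≃+ ↥ctx.Λ where
  toFun x := ⟨ctx.act w x, ctx.act_mem w x x.2⟩
  invFun x := ⟨ctx.act w⁻¹ x, ctx.act_mem w⁻¹ x x.2⟩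
  left_inv x := by
    ext
    show (ctx.act w⁻¹ * ctx.act w) (x : V) = (x : V)
    rw [← map_mul, inv_mul_cancel, map_one]
    rfl
  right_inv x := by
    ext
    show (ctx.act w * ctx.act w⁻¹) (x : V) = (x : V)
    rw [← map_mul, mul_inv_cancel, map_one]
    rfl
  map_add' x y := by
    ext
    show ctx.act w (↑x + ↑y) = ctx.act w x + ctx.act w y
    exact map_add _ _ _

/-- The action of `w ∈ W` on `ℚ[Λ]` by `ℚ`-algebra (in particular ring) automorphisms,
with `w · e^λ = e^{w(λ)}`. -/
noncomputable def wact (w : W) : ctx.QΛ ≃ₐ[ℚ] ctx.QΛ :=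
  AddMonoidAlgebra.domCongr ℚ ℚ (ctx.actΛ w)

/-- The augmentation `ε : ℚ[Λ] → ℚ`, the `ℚ`-algebra homomorphism with `ε(e^λ) = 1`. -/
noncomputable def eps : ctx.QΛ →ₐ[ℚ] ℚ := AddMonoidAlgebra.lift ℚ ℚ ↥ctx.Λ 1

/-- `L` is *the* Demazure operator `L_{s_α}` attached to the simple root `α = idx b`:
the unique `ℚ`-linear endomorphism of `ℚ[Λ]` satisfying
`(1 - e^α) * L f = f - s_α · f` for all `f`. -/
def IsDemazure (b : B) (L : ctx.QΛ →ₗ[ℚ] ctx.QΛ) : Prop :=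
  ∀ f : ctx.QΛ, (1 - ctx.e (ctx.simpleRoot b)) * L f = f - ctx.wact (ctx.cs.simple b) f

/-- Given a family `L` of Demazure operators indexed by the simple roots,
`Lword L [α₁, …, α_k] = L_{s_{α₁}} ∘ ⋯ ∘ L_{s_{α_k}}`; applied to reduced words it yields the
operators `L_w`. -/
noncomputable def Lword (L : B → ctx.QΛ →ₗ[ℚ] ctx.QΛ) (ω : List B) :
    ctx.QΛ →ₗ[ℚ] ctx.QΛ :=
  ω.foldr (fun b g => (L b).comp g) LinearMap.id

/-- The Bruhat order on `W`: `v ≤ w` iff some (equivalently, every) reduced word for `w`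
contains a subword which is a reduced word for `v`. -/
def BruhatLE (v w : W) : Prop :=
  ∃ ω : List B, ctx.cs.IsReduced ω ∧ ctx.cs.wordProd ω = w ∧
    ∃ ω' : List B, ω'.Sublist ω ∧ ctx.cs.IsReduced ω' ∧ ctx.cs.wordProd ω' = v

end RootCtx

/-- The standard parabolic subgroup `W_I` generated by the simple reflections indexed by `I`. -/
def RootCtx.parabolic {V B W : Type} [AddCommGroup V] [Module ℚ V] [Group W]
    {M : CoxeterMatrix B} (ctx : RootCtx V B W M) (I : Finset B) : Subgroup W :=
  Subgroup.closure {u : W | ∃ b ∈ I, u = ctx.cs.simple b}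

/-! Every letter `s_b` of a reduced word for `w' ∈ W_I` lies in `W_I`: the first letter satisfies
`w'⁻¹ α_b < 0` (by the criterion `ℓ(u s_b) > ℓ(u) ↔ u α_b > 0`), whereas `W_I` keeps the
positive roots outside the span of `{α_c : c ∈ I}` positive, so `α_b` lies in that span.
For such a letter `s_b r = r`, and `s_b ρ = ρ - α_b` gives `s_b e^{-ρ} = e^{α_b} e^{-ρ}`; hence
`(1 - e^{α_b}) L_{s_b}(r e^{-ρ}) = (1 - e^{α_b}) r e^{-ρ}`, and cancelling in the domain `ℚ[Λ]`
shows that `L_{w'}` fixes `r e^{-ρ}`. -/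

instance AddSubgroup.twoUniqueSums_of_module_rat {V : Type*} [AddCommGroup V] [Module ℚ V]
    (S : AddSubgroup V) : TwoUniqueSums S :=
  TwoUniqueSums.of_injective_addHom S.subtype.toAddHom Subtype.val_injective inferInstance

namespace RootCtx

variable {V B W : Type} [AddCommGroup V] [Module ℚ V] [Group W] {M : CoxeterMatrix B}
variable (ctx : RootCtx V B W M)

section Roots

lemma zero_notMem_Φ : (0 : V) ∉ ctx.Φ := fun h => by simpa using ctx.coroot_self 0 h

lemma mem_span_Δ_of_mem_Φpos {β : V} (hβ : β ∈ ctx.Φpos) :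
    β ∈ Submodule.span ℚ (ctx.Δ : Set V) := by
  obtain ⟨c, -, rfl⟩ := (ctx.mem_Φpos β (ctx.Φpos_sub hβ)).mp hβ
  exact Submodule.sum_mem _ fun γ hγ => Submodule.smul_mem _ _ (Submodule.subset_span hγ)

lemma span_Δ_eq_top : Submodule.span ℚ (ctx.Δ : Set V) = ⊤ := by
  rw [eq_top_iff, ← ctx.span_eq_top, Submodule.span_le]
  intro α hα
  rcases ctx.pos_or_neg α hα with h | h
  · exact ctx.mem_span_Δ_of_mem_Φpos h
  · simpa using Submodule.neg_mem _ (ctx.mem_span_Δ_of_mem_Φpos h)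

noncomputable def basisΔ : Module.Basis ctx.Δ ℚ V :=
  Module.Basis.mk ctx.Δ_indep (by rw [Subtype.range_coe_subtype]; exact ctx.span_Δ_eq_top.ge)

@[simp] lemma basisΔ_apply (γ : ctx.Δ) : ctx.basisΔ γ = γ := Module.Basis.mk_apply _ _ _

lemma basisΔ_repr_coe_idx (b : B) :
    ctx.basisΔ.repr (ctx.idx b : V) = Finsupp.single (ctx.idx b) 1 := by
  rw [← basisΔ_apply, Module.Basis.repr_self]

lemma basisΔ_repr_nonneg {β : V} (hβ : β ∈ ctx.Φpos) (γ : ctx.Δ) :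
    0 ≤ ctx.basisΔ.repr β γ := by
  obtain ⟨c, hc, hβc⟩ := (ctx.mem_Φpos β (ctx.Φpos_sub hβ)).mp hβ
  have : β = ∑ δ : ctx.Δ, c δ • ctx.basisΔ δ := by
    rw [hβc, ← Finset.sum_coe_sort]
    simp
  rw [this, ctx.basisΔ.repr_sum_self]
  exact hc γ γ.2

lemma neg_notMem_Φpos {β : V} (hβ : β ∈ ctx.Φpos) : -β ∉ ctx.Φpos := fun hneg => by
  have : β = 0 := ctx.basisΔ.repr.injective <| Finsupp.ext fun γ => by
    have := ctx.basisΔ_repr_nonneg hneg γ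
    simp only [map_neg, Finsupp.coe_neg, Pi.neg_apply, Left.nonneg_neg_iff] at this
    simpa using le_antisymm this (ctx.basisΔ_repr_nonneg hβ γ)
  exact ctx.zero_notMem_Φ (this ▸ ctx.Φpos_sub hβ)

lemma coe_idx_mem_Φ (b : B) : (ctx.idx b : V) ∈ ctx.Φ := ctx.Δ_sub (ctx.idx b).2

lemma coe_idx_ne_zero (b : B) : (ctx.idx b : V) ≠ 0 :=
  fun h => ctx.zero_notMem_Φ (h ▸ ctx.coe_idx_mem_Φ b)

lemma coe_idx_mem_Φpos (b : B) : (ctx.idx b : V) ∈ ctx.Φpos := by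
  classical
  refine (ctx.mem_Φpos _ (ctx.coe_idx_mem_Φ b)).mpr
    ⟨fun β => if β = ctx.idx b then 1 else 0, fun β _ => by dsimp only; split_ifs <;> norm_num, ?_⟩
  simp [ite_smul, (ctx.idx b).2]

end Roots

section WeylAction

lemma act_mul_apply (u w : W) (x : V) : ctx.act (u * w) x = ctx.act u (ctx.act w x) := by
  rw [map_mul, LinearEquiv.mul_apply]

lemma act_inv_apply (w : W) (x : V) : ctx.act w⁻¹ x = (ctx.act w).symm x := by
  rw [map_inv, LinearEquiv.coe_inv]

lemma act_mem_Φ (w : W) {β : V} (hβ : β ∈ ctx.Φ) : ctx.act w β ∈ ctx.Φ := by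
  induction w using ctx.cs.simple_induction generalizing β with
  | simple b => exact ctx.act_simple b β ▸ ctx.reflect_root_mem _ (ctx.coe_idx_mem_Φ b) _ hβ
  | one => simpa using hβ
  | mul u w hu hw => exact ctx.act_mul_apply u w β ▸ hu (hw hβ)

lemma act_simple_self (b : B) :
    ctx.act (ctx.cs.simple b) (ctx.idx b : V) = -(ctx.idx b : V) := by
  rw [ctx.act_simple b, ctx.coroot_self _ (ctx.coe_idx_mem_Φ b)]
  module

lemma act_simple_act_simple (b : B) (x : V) :
    ctx.act (ctx.cs.simple b) (ctx.act (ctx.cs.simple b) x) = x := by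
  rw [← ctx.act_mul_apply, ctx.cs.simple_mul_simple_self, map_one, LinearEquiv.coe_one, id]

lemma basisΔ_repr_act_simple_of_ne {c : B} {γ : ctx.Δ} (hγ : γ ≠ ctx.idx c) (x : V) :
    ctx.basisΔ.repr (ctx.act (ctx.cs.simple c) x) γ = ctx.basisΔ.repr x γ := by
  rw [ctx.act_simple, map_sub, map_smul, basisΔ_repr_coe_idx]
  simp [Finsupp.single_eq_of_ne hγ]

lemma eq_coe_idx_of_basisΔ_repr_eq_zero {β : V} {c : B} (hβ : β ∈ ctx.Φpos)
    (h : ∀ γ ≠ ctx.idx c, ctx.basisΔ.repr β γ = 0) : β = ctx.idx c := by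
  have hβc : β = ctx.basisΔ.repr β (ctx.idx c) • (ctx.idx c : V) := by
    refine ctx.basisΔ.repr.injective (Finsupp.ext fun γ => ?_)
    rcases eq_or_ne γ (ctx.idx c) with rfl | hγ
    · simp [basisΔ_repr_coe_idx]
    · simp [basisΔ_repr_coe_idx, h γ hγ, Finsupp.single_eq_of_ne hγ]
  rcases ctx.reduced _ (ctx.coe_idx_mem_Φ c) _ (hβc ▸ ctx.Φpos_sub hβ) with h1 | h1
  · rwa [h1, one_smul] at hβc
  · have := ctx.basisΔ_repr_nonneg hβ (ctx.idx c)
    rw [h1] at this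
    norm_num at this

lemma act_simple_mem_Φpos {c : B} {β : V} (hβ : β ∈ ctx.Φpos) (hne : β ≠ ctx.idx c) :
    ctx.act (ctx.cs.simple c) β ∈ ctx.Φpos := by
  by_contra hnotpos
  have hneg : -ctx.act (ctx.cs.simple c) β ∈ ctx.Φpos :=
    (ctx.pos_or_neg _ (ctx.act_mem_Φ _ (ctx.Φpos_sub hβ))).resolve_left hnotpos
  refine hne (ctx.eq_coe_idx_of_basisΔ_repr_eq_zero hβ fun γ hγ => ?_)
  have := ctx.basisΔ_repr_nonneg hneg γ
  rw [map_neg, Finsupp.neg_apply, ctx.basisΔ_repr_act_simple_of_ne hγ] at this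
  linarith [ctx.basisΔ_repr_nonneg hβ γ]

lemma act_simple_mem_Φpos_erase [DecidableEq V] {c : B} {β : V} (hβ : β ∈ ctx.Φpos.erase (ctx.idx c)) :
    ctx.act (ctx.cs.simple c) β ∈ ctx.Φpos.erase (ctx.idx c) := by
  obtain ⟨hne, hpos⟩ := Finset.mem_erase.mp hβ
  refine Finset.mem_erase.mpr ⟨fun h => ?_, ctx.act_simple_mem_Φpos hpos hne⟩
  have := congrArg (ctx.act (ctx.cs.simple c)) h
  rw [ctx.act_simple_act_simple, ctx.act_simple_self] at this
  exact ctx.neg_notMem_Φpos (ctx.coe_idx_mem_Φpos c) (this ▸ hpos)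

lemma act_simple_ρ (b : B) : ctx.act (ctx.cs.simple b) ctx.ρ = ctx.ρ - ctx.idx b := by
  classical
  have hα := ctx.coe_idx_mem_Φpos b
  have hperm : ∑ β ∈ ctx.Φpos.erase (ctx.idx b), ctx.act (ctx.cs.simple b) β =
      ∑ β ∈ ctx.Φpos.erase (ctx.idx b), β :=
    Finset.sum_nbij' _ _ (fun _ => ctx.act_simple_mem_Φpos_erase)
      (fun _ => ctx.act_simple_mem_Φpos_erase) (fun β _ => ctx.act_simple_act_simple b β)
      (fun β _ => ctx.act_simple_act_simple b β) (fun _ _ => rfl)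
  refine smul_right_injective V (two_ne_zero (α := ℚ)) ?_
  dsimp only
  rw [← map_smul, ctx.ρ_def, map_sum, ← Finset.sum_erase_add _ _ hα, hperm,
    ctx.act_simple_self, smul_sub, ctx.ρ_def, ← Finset.sum_erase_add _ _ hα]
  module

/-- If `k(β) ≠ 0` for a root `β`, the powers of `t` would move `β` through infinitely many
roots. -/
lemma eq_one_of_act_eq_add_smul {t : W} {α : V} (hα : α ≠ 0) (hfix : ctx.act t α = α)
    (h : ∀ x, ∃ k : ℚ, ctx.act t x = x + k • α) : t = 1 := by
  have hpow : ∀ x (k : ℚ), ctx.act t x = x + k • α →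
      ∀ n : ℕ, ctx.act (t ^ n) x = x + (n * k) • α := by
    intro x k hx n
    induction n with
    | zero => simp
    | succ n ih =>
      rw [pow_succ', ctx.act_mul_apply, ih, map_add, map_smul, hx, hfix]
      push_cast
      module
  have hroot : ∀ β ∈ ctx.Φ, ctx.act t β = β := by
    intro β hβ
    obtain ⟨k, hk⟩ := h β
    suffices k = 0 by simp [hk, this]
    by_contra hk0
    have hinj : Function.Injective fun n : ℕ => β + (n * k) • α := fun m n hmn => by
      simpa [hk0] using smul_left_injective ℚ hα (add_left_cancel hmn)
    exact Set.infinite_of_injective_forall_mem (s := (ctx.Φ : Set V)) hinj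
      (fun n => hpow β k hk n ▸ ctx.act_mem_Φ _ hβ) ctx.Φ.finite_toSet
  apply ctx.act_faithful
  rw [map_one]
  exact LinearEquiv.toLinearMap_injective (LinearMap.ext_on ctx.span_eq_top hroot)

lemma conj_simple_eq_simple {u : W} {b c : B} (h : ctx.act u (ctx.idx b : V) = ctx.idx c) :
    u * ctx.cs.simple b * u⁻¹ = ctx.cs.simple c := by
  have hinv : ctx.act u⁻¹ (ctx.idx c : V) = ctx.idx b := by
    rw [ctx.act_inv_apply, ← h, LinearEquiv.symm_apply_apply]
  have ht : u * ctx.cs.simple b * u⁻¹ * ctx.cs.simple c = 1 := by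
    refine ctx.eq_one_of_act_eq_add_smul (ctx.coe_idx_ne_zero c) ?_ fun x => ?_
    · simp only [ctx.act_mul_apply, ctx.act_simple_self, map_neg, hinv, neg_neg, h]
    · refine ⟨-ctx.coroot (ctx.idx c) x -
        ctx.coroot (ctx.idx b) (ctx.act u⁻¹ (ctx.act (ctx.cs.simple c) x)), ?_⟩
      rw [ctx.act_mul_apply, ctx.act_mul_apply, ctx.act_mul_apply, ctx.act_simple b, map_sub,
        map_smul, h, ctx.act_inv_apply, LinearEquiv.apply_symm_apply, ctx.act_simple c]
      module
  rwa [mul_eq_one_iff_eq_inv, ctx.cs.inv_simple] at ht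

/-- Induct on `ℓ(u)` by peeling off a left descent `s_c`; the only way `s_c` could make
`u' α_b` negative is `u' α_b = α_c`, and then `u s_b = u'` would be shorter than `u`. -/
lemma act_coe_idx_mem_Φpos_of_length_lt {u : W} {b : B}
    (h : ctx.cs.length u < ctx.cs.length (u * ctx.cs.simple b)) :
    ctx.act u (ctx.idx b : V) ∈ ctx.Φpos := by
  induction hn : ctx.cs.length u using Nat.strong_induction_on generalizing u with
  | _ n ih =>
  rcases eq_or_ne u 1 with rfl | hu
  · simpa using ctx.coe_idx_mem_Φpos b
  obtain ⟨c, hc⟩ := ctx.cs.exists_leftDescent_of_ne_one hu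
  obtain ⟨u', rfl⟩ : ∃ u', u = ctx.cs.simple c * u' :=
    ⟨ctx.cs.simple c * u, by rw [ctx.cs.simple_mul_simple_cancel_left]⟩
  have hlen := ctx.cs.isLeftDescent_iff.mp hc
  rw [ctx.cs.simple_mul_simple_cancel_left] at hlen
  have hlt' : ctx.cs.length u' < ctx.cs.length (u' * ctx.cs.simple b) := by
    have := ctx.cs.length_simple_mul (u' * ctx.cs.simple b) c
    rw [mul_assoc] at h
    omega
  have hpos' := ih _ (by omega) hlt' rfl
  by_cases he : ctx.act u' (ctx.idx b : V) = ctx.idx c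
  · have hshort : ctx.cs.simple c * u' * ctx.cs.simple b = u' := by
      rw [show ctx.cs.simple c * u' * ctx.cs.simple b =
          ctx.cs.simple c * (u' * ctx.cs.simple b * u'⁻¹) * u' by group,
        ctx.conj_simple_eq_simple he, ctx.cs.simple_mul_simple_self, one_mul]
    rw [hshort] at h
    omega
  · rw [ctx.act_mul_apply]
    exact ctx.act_simple_mem_Φpos hpos' he

lemma length_lt_length_mul_simple_iff {u : W} {b : B} :
    ctx.cs.length u < ctx.cs.length (u * ctx.cs.simple b) ↔
      ctx.act u (ctx.idx b : V) ∈ ctx.Φpos := by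
  refine ⟨ctx.act_coe_idx_mem_Φpos_of_length_lt, fun hpos => ?_⟩
  by_contra hge
  have hlt : ctx.cs.length (u * ctx.cs.simple b) <
      ctx.cs.length (u * ctx.cs.simple b * ctx.cs.simple b) := by
    rw [ctx.cs.simple_mul_simple_cancel_right]
    have := ctx.cs.length_mul_simple_ne u b
    omega
  have hneg := ctx.act_coe_idx_mem_Φpos_of_length_lt hlt
  rw [ctx.act_mul_apply, ctx.act_simple_self, map_neg] at hneg
  exact ctx.neg_notMem_Φpos hpos hneg

end WeylAction

section Parabolic

def spanSimpleRoots (I : Finset B) : Submodule ℚ V :=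
  Submodule.span ℚ ((fun c => (ctx.idx c : V)) '' I)

lemma mem_of_coe_idx_mem_spanSimpleRoots {I : Finset B} {b : B}
    (h : (ctx.idx b : V) ∈ ctx.spanSimpleRoots I) : b ∈ I := by
  by_contra hb
  exact (ctx.Δ_indep.comp ctx.idx ctx.idx.injective).notMem_span_image hb h

lemma act_simple_mem_Φpos_of_notMem_spanSimpleRoots {I : Finset B} {c : B} (hc : c ∈ I)
    {β : V} (hβ : β ∈ ctx.Φpos) (hβI : β ∉ ctx.spanSimpleRoots I) :
    ctx.act (ctx.cs.simple c) β ∈ ctx.Φpos ∧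
      ctx.act (ctx.cs.simple c) β ∉ ctx.spanSimpleRoots I := by
  have hαc : (ctx.idx c : V) ∈ ctx.spanSimpleRoots I :=
    Submodule.subset_span ⟨c, hc, rfl⟩
  refine ⟨ctx.act_simple_mem_Φpos hβ (fun h => hβI (h ▸ hαc)), fun hmem => hβI ?_⟩
  rw [ctx.act_simple] at hmem
  simpa using Submodule.add_mem _ hmem (Submodule.smul_mem _ (ctx.coroot (ctx.idx c) β) hαc)

lemma act_mem_Φpos_of_mem_parabolic {I : Finset B} {u : W} (hu : u ∈ ctx.parabolic I)
    {β : V} (hβ : β ∈ ctx.Φpos) (hβI : β ∉ ctx.spanSimpleRoots I) :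
    ctx.act u β ∈ ctx.Φpos ∧ ctx.act u β ∉ ctx.spanSimpleRoots I := by
  induction hu using Subgroup.closure_induction'' generalizing β with
  | mem _ hx =>
    obtain ⟨c, hc, rfl⟩ := hx
    exact ctx.act_simple_mem_Φpos_of_notMem_spanSimpleRoots hc hβ hβI
  | inv_mem _ hx =>
    obtain ⟨c, hc, rfl⟩ := hx
    rw [ctx.cs.inv_simple]
    exact ctx.act_simple_mem_Φpos_of_notMem_spanSimpleRoots hc hβ hβI
  | one => simpa using ⟨hβ, hβI⟩
  | mul x y _ _ hx hy =>
    rw [ctx.act_mul_apply]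
    exact hx (hy hβ hβI).1 (hy hβ hβI).2

lemma mem_of_mem_of_isReduced_of_wordProd_mem_parabolic {I : Finset B} {ω : List B}
    (hω : ctx.cs.IsReduced ω) (hωI : ctx.cs.wordProd ω ∈ ctx.parabolic I) : ∀ b ∈ ω, b ∈ I := by
  induction ω with
  | nil => simp
  | cons b ω ih =>
    have hb : b ∈ I := by
      by_contra hbI
      have hdesc : ctx.cs.length (ctx.cs.wordProd (b :: ω))⁻¹ ≥
          ctx.cs.length ((ctx.cs.wordProd (b :: ω))⁻¹ * ctx.cs.simple b) := by
        rw [← ctx.cs.inv_simple, ← mul_inv_rev, ctx.cs.length_inv, ctx.cs.length_inv, hω.eq,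
          ctx.cs.wordProd_cons, ctx.cs.simple_mul_simple_cancel_left]
        simpa using (ctx.cs.length_wordProd_le ω).trans (Nat.le_succ _)
      exact (ctx.length_lt_length_mul_simple_iff.not.mp (not_lt.mpr hdesc))
        (ctx.act_mem_Φpos_of_mem_parabolic (inv_mem hωI) (ctx.coe_idx_mem_Φpos b)
          (mt ctx.mem_of_coe_idx_mem_spanSimpleRoots hbI)).1
    have hωI' : ctx.cs.wordProd ω ∈ ctx.parabolic I := by
      rw [← ctx.cs.simple_mul_simple_cancel_left (w := ctx.cs.wordProd ω) b,
        ← ctx.cs.wordProd_cons]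
      exact mul_mem (Subgroup.subset_closure ⟨b, hb, rfl⟩) hωI
    simpa [hb] using ih (by simpa using hω.drop 1) hωI'

end Parabolic

section Demazure

lemma e_add (x y : ctx.Λ) : ctx.e (x + y) = ctx.e x * ctx.e y := by
  simp [e, AddMonoidAlgebra.single_mul_single]

lemma one_sub_e_ne_zero {x : ctx.Λ} (hx : x ≠ 0) : (1 : ctx.QΛ) - ctx.e x ≠ 0 := by
  rw [sub_ne_zero, e, AddMonoidAlgebra.of'_apply, AddMonoidAlgebra.one_def, Ne,
    AddMonoidAlgebra.single_left_inj one_ne_zero]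
  exact hx.symm

lemma simpleRoot_ne_zero (b : B) : ctx.simpleRoot b ≠ 0 :=
  fun h => ctx.coe_idx_ne_zero b (congrArg Subtype.val h)

lemma wact_e (w : W) (x : ctx.Λ) : ctx.wact w (ctx.e x) = ctx.e (ctx.actΛ w x) :=
  AddMonoidAlgebra.domCongr_single _ _ _

lemma actΛ_simple_neg_ρΛ (b : B) :
    ctx.actΛ (ctx.cs.simple b) (-ctx.ρΛ) = ctx.simpleRoot b + -ctx.ρΛ := Subtype.ext <| by
  change ctx.act (ctx.cs.simple b) (-ctx.ρ) = ctx.idx b + -ctx.ρ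
  rw [map_neg, ctx.act_simple_ρ]
  abel

variable {ctx} in
lemma IsDemazure.apply_mul_e_neg_ρΛ {b : B} {Lb : ctx.QΛ →ₗ[ℚ] ctx.QΛ}
    (hLb : ctx.IsDemazure b Lb) {r : ctx.QΛ} (hr : ctx.wact (ctx.cs.simple b) r = r) :
    Lb (r * ctx.e (-ctx.ρΛ)) = r * ctx.e (-ctx.ρΛ) := by
  refine mul_left_cancel₀ (ctx.one_sub_e_ne_zero (ctx.simpleRoot_ne_zero b)) ?_
  rw [hLb, map_mul, hr, ctx.wact_e, ctx.actΛ_simple_neg_ρΛ, ctx.e_add]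
  ring

lemma Lword_mul_e_neg_ρΛ {L : B → ctx.QΛ →ₗ[ℚ] ctx.QΛ} (hL : ∀ b, ctx.IsDemazure b (L b))
    {r : ctx.QΛ} {ω : List B} (hr : ∀ b ∈ ω, ctx.wact (ctx.cs.simple b) r = r) :
    ctx.Lword L ω (r * ctx.e (-ctx.ρΛ)) = r * ctx.e (-ctx.ρΛ) := by
  induction ω with
  | nil => rfl
  | cons b ω ih =>
    change L b (ctx.Lword L ω _) = _
    rw [ih fun b' hb' => hr b' (List.mem_cons_of_mem b hb')]
    exact (hL b).apply_mul_e_neg_ρΛ (hr b List.mem_cons_self)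

end Demazure

end RootCtx

theorem stmt10_general {V B W : Type} [AddCommGroup V] [Module ℚ V] [Group W] {M : CoxeterMatrix B}
    (ctx : RootCtx V B W M)
    (L : B → ctx.QΛ →ₗ[ℚ] ctx.QΛ) (hL : ∀ b : B, ctx.IsDemazure b (L b))
    (I : Finset B) (r : ctx.QΛ)
    (hr : ∀ u ∈ ctx.parabolic I, ctx.wact u r = r)
    (v w' : W) (hw' : w' ∈ ctx.parabolic I) :
    ∀ ωv ωw : List B,
      ctx.cs.IsReduced ωv → ctx.cs.wordProd ωv = v →
      ctx.cs.IsReduced ωw → ctx.cs.wordProd ωw = w' →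
      ctx.Lword L ωv (ctx.Lword L ωw (r * ctx.e (-ctx.ρΛ))) =
        ctx.Lword L ωv (r * ctx.e (-ctx.ρΛ)) := by
  intro ωv ωw _ _ hωw hωw'
  have hletters := ctx.mem_of_mem_of_isReduced_of_wordProd_mem_parabolic hωw (hωw' ▸ hw')
  rw [ctx.Lword_mul_e_neg_ρΛ hL fun b hb =>
    hr _ (Subgroup.subset_closure ⟨b, hletters b hb, rfl⟩)]

/-- for `I ⊆ Δ` (encoded by the index set `I : Finset B` of simple roots),
`r ∈ ℚ[Λ]` invariant under `W_I`, `v ∈ W` and `w' ∈ W_I` with `ℓ(v·w') = ℓ(v) + ℓ(w')`,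
one has `L_v(L_{w'}(r · e^{−ρ})) = L_v(r · e^{−ρ})` for any reduced words for `v` and `w'`. -/
theorem stmt10 {V B W : Type} [AddCommGroup V] [Module ℚ V] [Group W] {M : CoxeterMatrix B}
    (ctx : RootCtx V B W M)
    (L : B → ctx.QΛ →ₗ[ℚ] ctx.QΛ) (hL : ∀ b : B, ctx.IsDemazure b (L b))
    (I : Finset B) (r : ctx.QΛ)
    (hr : ∀ u ∈ ctx.parabolic I, ctx.wact u r = r)
    (v w' : W) (hw' : w' ∈ ctx.parabolic I)
    (hlen : ctx.cs.length (v * w') = ctx.cs.length v + ctx.cs.length w') :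
    ∀ ωv ωw : List B,
      ctx.cs.IsReduced ωv → ctx.cs.wordProd ωv = v →
      ctx.cs.IsReduced ωw → ctx.cs.wordProd ωw = w' →
      ctx.Lword L ωv (ctx.Lword L ωw (r * ctx.e (-ctx.ρΛ))) =
        ctx.Lword L ωv (r * ctx.e (-ctx.ρΛ)) :=
  stmt10_general ctx L hL I r hr v w' hw'
end
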